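/- arXiv:math-ph/0006021 — 3 statements merged into one kernel-verified Lean document; each statement's English description precedes it below -/
import Mathlib

section
/- Let A be a unital C*-algebra and Φ a faithful state on A. Assume that for every self-adjoint x ∈ A and every ε > 0 there exists a self-adjoint y ∈ A with ‖x − y‖ < ε such that the spectrum of y is finite and for every μ in the spectrum of y the minimal spectral projection 1_{{μ}}(y) (obtained by applying the continuous functional calculus of y to the indicator function of {μ}, which is continuous on the finite spectrum of y) satisfies Φ(1_{{μ}}(y)) < ε. Then the set of self-adjoint elements of A whose spectrum is a Cantor set (i.e., nowhere dense in ℝ and without isolated points) is dense in the set of all self-adjoint elements of A. -/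
open Filter Metric Polynomial Topology

section Aux
variable {A : Type*} [CStarAlgebra A]

private lemma aux_spec_perturb [Nontrivial A] {a b : A} (ha : IsSelfAdjoint a)
    (_hb : IsSelfAdjoint b) {l : ℝ} (hl : l ∈ spectrum ℝ b) :
    ∃ μ ∈ spectrum ℝ a, |l - μ| ≤ ‖a - b‖ := by
  by_contra hcon
  push_neg at hcon
  have hKne : (spectrum ℝ a).Nonempty := ha.spectrum_nonempty
  have hKc : IsCompact (spectrum ℝ a) := spectrum.isCompact a
  obtain ⟨μ₀, hμ₀, hmin⟩ := hKc.exists_isMinOn hKne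
    (continuous_const.dist continuous_id).continuousOn (f := fun t => dist l t)
  set d : ℝ := |l - μ₀| with hd
  have hdpos : ‖a - b‖ < d := hcon μ₀ hμ₀
  have hd0 : 0 < d := lt_of_le_of_lt (norm_nonneg _) hdpos
  have hne : ∀ t ∈ spectrum ℝ a, d ≤ |l - t| := by
    intro t ht
    have := hmin ht
    simpa [hd, Real.dist_eq] using this
  have hne' : ∀ t ∈ spectrum ℝ a, l - t ≠ 0 := fun t ht h0 => by
    have := hne t ht
    rw [h0, abs_zero] at this
    exact hd0.not_ge this
  have hgc : ContinuousOn (fun t : ℝ => (l - t)⁻¹) (spectrum ℝ a) :=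
    ContinuousOn.inv₀ (by fun_prop) hne'
  set u : A := cfc (fun t : ℝ => (l - t)⁻¹) a with hu
  have hres : cfc (fun t : ℝ => l - t) a = algebraMap ℝ A l - a := by
    rw [cfc_sub _ _ a (by fun_prop) (by fun_prop), cfc_const l a, cfc_id' ℝ a]
  have huv : u * (algebraMap ℝ A l - a) = 1 := by
    rw [← hres, hu, ← cfc_mul _ _ a hgc (by fun_prop)]
    rw [← cfc_one (R := ℝ) a]
    exact cfc_congr fun t ht => inv_mul_cancel₀ (hne' t ht)
  have hvu : (algebraMap ℝ A l - a) * u = 1 := by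
    rw [← hres, hu, ← cfc_mul _ _ a (by fun_prop) hgc]
    rw [← cfc_one (R := ℝ) a]
    exact cfc_congr fun t ht => mul_inv_cancel₀ (hne' t ht)
  have hnormu : ‖u‖ ≤ d⁻¹ := by
    apply norm_cfc_le (by positivity)
    intro t ht
    rw [Real.norm_eq_abs, abs_inv]
    exact inv_anti₀ hd0 (hne t ht)
  have hsmall : ‖u * (b - a)‖ < 1 := by
    calc ‖u * (b - a)‖ ≤ ‖u‖ * ‖b - a‖ := norm_mul_le _ _
    _ ≤ d⁻¹ * ‖a - b‖ := by rw [norm_sub_rev b a]; gcongr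
    _ < d⁻¹ * d := by gcongr
    _ = 1 := inv_mul_cancel₀ hd0.ne'
  have hunit1 : IsUnit ((1 : A) - u * (b - a)) := (Units.oneSub _ hsmall).isUnit
  have hunitv : IsUnit (algebraMap ℝ A l - a) :=
    ⟨⟨algebraMap ℝ A l - a, u, hvu, huv⟩, rfl⟩
  have key : algebraMap ℝ A l - b = (algebraMap ℝ A l - a) * (1 - u * (b - a)) := by
    rw [mul_sub, mul_one, ← mul_assoc, hvu, one_mul]
    abel
  have : IsUnit (algebraMap ℝ A l - b) := key ▸ hunitv.mul hunit1
  exact (spectrum.mem_iff.mp hl) this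

private lemma aux_exists_sq [Nontrivial A] {c : A} (hc : IsSelfAdjoint c) :
    ∃ s : A, star s * s = algebraMap ℝ A ‖c‖ - c := by
  set s : A := cfc (fun t : ℝ => Real.sqrt (‖c‖ - t)) c with hs
  have hsa : IsSelfAdjoint s := cfc_predicate _ c
  refine ⟨s, ?_⟩
  rw [hsa.star_eq, hs, ← cfc_mul _ _ c (by fun_prop) (by fun_prop)]
  have : cfc (fun t : ℝ => ‖c‖ - t) c = algebraMap ℝ A ‖c‖ - c := by
    rw [cfc_sub _ _ c (by fun_prop) (by fun_prop), cfc_const _ c, cfc_id' ℝ c]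
  rw [← this]
  apply cfc_congr
  intro t ht
  have : |t| ≤ ‖c‖ := by
    simpa [Real.norm_eq_abs] using spectrum.norm_le_norm_of_mem ht
  exact Real.mul_self_sqrt (by linarith [abs_le.mp this |>.2])

private lemma aux_cfc_tendsto {f : ℝ → ℝ} (hf : Continuous f) {Y : ℕ → A} {y : A}
    (hY : ∀ n, IsSelfAdjoint (Y n)) (hy : IsSelfAdjoint y)
    (hlim : Tendsto Y atTop (𝓝 y)) :
    Tendsto (fun n => cfc f (Y n)) atTop (𝓝 (cfc f y)) := by
  rw [Metric.tendsto_atTop]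
  intro θ hθ
  set M : ℝ := ‖y‖ + 1 with hM
  have hM0 : 0 < M := by positivity
  set g : C(Set.Icc (-M) M, ℝ) := ⟨_, hf.continuousOn (s := Set.Icc (-M) M)|>.restrict⟩
    with hg
  obtain ⟨p, hp⟩ := exists_polynomial_near_continuousMap (-M) M g (θ/4) (by positivity)
  have hp' : ∀ t ∈ Set.Icc (-M) M, |p.eval t - f t| < θ/4 := by
    intro t ht
    have h2 := (p.toContinuousMapOn (Set.Icc (-M) M) - g).norm_coe_le_norm ⟨t, ht⟩
    have happ : (p.toContinuousMapOn (Set.Icc (-M) M) - g) ⟨t, ht⟩ = p.eval t - f t := rfl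
    rw [happ, Real.norm_eq_abs] at h2
    exact lt_of_le_of_lt h2 hp
  have hspec : ∀ z : A, IsSelfAdjoint z → ‖z‖ ≤ M → ∀ t ∈ spectrum ℝ z,
      t ∈ Set.Icc (-M) M := by
    intro z hz hzM t ht
    have : |t| ≤ ‖z‖ := by
      rcases subsingleton_or_nontrivial A with hS | hN
      · exact absurd (spectrum.mem_iff.mp ht) (not_not_intro (isUnit_of_subsingleton _))
      · simpa [Real.norm_eq_abs] using spectrum.norm_le_norm_of_mem ht
    rw [abs_le] at this
    exact ⟨by linarith [this.1], by linarith [this.2]⟩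
  have hkey : ∀ z : A, IsSelfAdjoint z → ‖z‖ ≤ M → ‖cfc f z - aeval z p‖ ≤ θ/4 := by
    intro z hz hzM
    rw [← cfc_polynomial p z, ← cfc_sub _ _ z (by fun_prop) (by fun_prop)]
    apply norm_cfc_le (by positivity)
    intro t ht
    rw [Real.norm_eq_abs, abs_sub_comm]
    exact (hp' t (hspec z hz hzM t ht)).le
  have hev1 : ∀ᶠ n in atTop, ‖Y n‖ ≤ M := by
    have h1 : Tendsto (fun n => ‖Y n‖) atTop (𝓝 ‖y‖) := hlim.norm
    filter_upwards [h1.eventually (eventually_le_nhds (lt_add_one ‖y‖))] with n hn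
    exact hn
  have hev2 : ∀ᶠ n in atTop, ‖aeval (Y n) p - aeval y p‖ < θ/4 := by
    have h2 : Tendsto (fun n => aeval (Y n) p) atTop (𝓝 (aeval y p)) :=
      (p.continuous_aeval.tendsto y).comp hlim
    filter_upwards [h2.eventually_mem (Metric.ball_mem_nhds (aeval y p)
      (show (0:ℝ) < θ/4 by positivity))] with n hn
    simpa [dist_eq_norm] using hn
  obtain ⟨N, hN⟩ := (hev1.and hev2).exists_forall_of_atTop
  refine ⟨N, fun n hn => ?_⟩
  obtain ⟨hn1, hn2⟩ := hN n hn
  have hYk := hkey (Y n) (hY n) hn1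
  have hyk := hkey y hy (by simp [hM])
  rw [dist_eq_norm]
  calc ‖cfc f (Y n) - cfc f y‖
      = ‖(cfc f (Y n) - aeval (Y n) p) + (aeval (Y n) p - aeval y p)
          + (aeval y p - cfc f y)‖ := by congr 1; abel
    _ ≤ ‖(cfc f (Y n) - aeval (Y n) p) + (aeval (Y n) p - aeval y p)‖
          + ‖aeval y p - cfc f y‖ := norm_add_le _ _
    _ ≤ ‖cfc f (Y n) - aeval (Y n) p‖ + ‖aeval (Y n) p - aeval y p‖
          + ‖aeval y p - cfc f y‖ := by gcongr; exact norm_add_le _ _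
    _ < θ := by
        have h3 : ‖aeval y p - cfc f y‖ ≤ θ/4 := by rw [norm_sub_rev]; exact hyk
        linarith

private lemma aux_gap {S : Set ℝ} (hS : S.Finite) {c : ℝ} (hc : 0 < c) :
    ∃ δ : ℝ, 0 < δ ∧ δ ≤ c ∧ ∀ μ ∈ S, ∀ μ' ∈ S, μ ≠ μ' → 8 * δ ≤ |μ - μ'| := by
  classical
  set F := hS.toFinset with hF
  set T := ((F ×ˢ F).filter (fun p => p.1 ≠ p.2)).image (fun p => |p.1 - p.2| / 8) with hT
  by_cases hTne : T.Nonempty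
  · refine ⟨min c (T.min' hTne), ?_, min_le_left _ _, ?_⟩
    · apply lt_min hc
      obtain ⟨p, hp, hpe⟩ := Finset.mem_image.mp (T.min'_mem hTne)
      have hne : p.1 ≠ p.2 := (Finset.mem_filter.mp hp).2
      rw [← hpe]
      have : p.1 - p.2 ≠ 0 := sub_ne_zero.mpr hne
      positivity
    · intro μ hμ μ' hμ' hne
      have hmem : |μ - μ'| / 8 ∈ T := Finset.mem_image.mpr ⟨(μ, μ'),
        Finset.mem_filter.mpr ⟨Finset.mem_product.mpr
          ⟨hS.mem_toFinset.mpr hμ, hS.mem_toFinset.mpr hμ'⟩, hne⟩, rfl⟩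
      have h1 := T.min'_le _ hmem
      have h2 : min c (T.min' hTne) ≤ |μ - μ'| / 8 := le_trans (min_le_right _ _) h1
      linarith
  · refine ⟨c, hc, le_refl c, fun μ hμ μ' hμ' hne => absurd ?_ hTne⟩
    exact ⟨|μ - μ'| / 8, Finset.mem_image.mpr ⟨(μ, μ'),
      Finset.mem_filter.mpr ⟨Finset.mem_product.mpr
        ⟨hS.mem_toFinset.mpr hμ, hS.mem_toFinset.mpr hμ'⟩, hne⟩, rfl⟩⟩

end Aux

/-- Choi–Elliott: in a unital C*-algebra with a faithful state `Φ`, if every self-adjoint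
element can be approximated arbitrarily well by self-adjoint elements with finite spectrum
whose minimal spectral projections have arbitrarily small value under `Φ`, then the
self-adjoint elements whose spectrum is a Cantor set (nowhere dense, without isolated
points) are dense in the self-adjoint elements. -/
theorem cantor_spectrum_dense_of_faithful_state_infinitesimal
    {A : Type*} [CStarAlgebra A]
    (Φ : A →ₗ[ℂ] ℂ)
    (hΦpos : ∀ a : A, 0 ≤ (Φ (star a * a)).re ∧ (Φ (star a * a)).im = 0)
    (hΦstate : Φ 1 = 1)
    (hΦfaithful : ∀ a : A, Φ (star a * a) = 0 → a = 0)
    (happrox : ∀ x : A, IsSelfAdjoint x → ∀ ε : ℝ, 0 < ε →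
      ∃ y : A, IsSelfAdjoint y ∧ ‖x - y‖ < ε ∧ (spectrum ℝ y).Finite ∧
        ∀ μ ∈ spectrum ℝ y,
          (Φ (cfc (Set.indicator {μ} (fun _ => (1 : ℝ))) y)).re < ε) :
    ∀ x : A, IsSelfAdjoint x → ∀ ε : ℝ, 0 < ε →
      ∃ y : A, IsSelfAdjoint y ∧ ‖x - y‖ < ε ∧
        IsNowhereDense (spectrum ℝ y) ∧ Preperfect (spectrum ℝ y) := by
  intro x hx ε hε
  rcases subsingleton_or_nontrivial A with hS | hN
  · refine ⟨x, hx, by simpa using hε, ?_, ?_⟩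
    · have hempty : spectrum ℝ x = ∅ := by
        ext t
        simp only [Set.mem_empty_iff_false, iff_false]
        exact fun ht => (spectrum.mem_iff.mp ht) (isUnit_of_subsingleton _)
      rw [hempty]
      exact isNowhereDense_empty
    · intro t ht
      exact absurd (spectrum.mem_iff.mp ht) (not_not_intro (isUnit_of_subsingleton _))
  -- Φ is bounded (real part) on selfadjoint elements
  have hΦle : ∀ c : A, IsSelfAdjoint c → (Φ c).re ≤ ‖c‖ := by
    intro c hc
    obtain ⟨s, hs⟩ := aux_exists_sq hc
    have h1 := (hΦpos s).1
    rw [hs] at h1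
    have halg : Φ (algebraMap ℝ A ‖c‖) = (‖c‖ : ℂ) := by
      rw [IsScalarTower.algebraMap_apply ℝ ℂ A, Algebra.algebraMap_eq_smul_one,
        map_smul, hΦstate, smul_eq_mul, mul_one]
      rfl
    rw [map_sub, halg, Complex.sub_re, Complex.ofReal_re] at h1
    linarith
  -- the recursive construction
  set Good : A × ℝ → Prop := fun q => IsSelfAdjoint q.1 ∧ 0 < q.2 ∧
    ∀ μ ∈ spectrum ℝ q.1, ∀ μ' ∈ spectrum ℝ q.1, μ ≠ μ' → 8 * q.2 ≤ |μ - μ'| with hGood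
  have hstep : ∀ t : {q : A × ℝ // Good q}, ∃ t' : {q : A × ℝ // Good q},
      ‖t.1.1 - t'.1.1‖ < t.1.2 ∧ t'.1.2 ≤ t.1.2 / 2 ∧
      ∀ μ ∈ spectrum ℝ t'.1.1,
        (Φ (cfc (Set.indicator {μ} (fun _ => (1 : ℝ))) t'.1.1)).re < t.1.2 := by
    rintro ⟨⟨z, δ⟩, hz, hδ, -⟩
    obtain ⟨w, hw, hwz, hwfin, hwproj⟩ := happrox z hz δ hδ
    obtain ⟨δ', hδ'pos, hδ'le, hδ'gap⟩ := aux_gap hwfin (show 0 < δ/2 by linarith)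
    exact ⟨⟨(w, δ'), hw, hδ'pos, hδ'gap⟩, hwz, hδ'le, hwproj⟩
  choose F hF1 hF2 hF3 using hstep
  obtain ⟨y₀, hy₀, hxy₀, hy₀fin, -⟩ := happrox x hx (ε/2) (by linarith)
  obtain ⟨δ₀, hδ₀pos, hδ₀le, hδ₀gap⟩ := aux_gap hy₀fin (show 0 < ε/8 by linarith)
  set t0 : {q : A × ℝ // Good q} := ⟨(y₀, δ₀), hy₀, hδ₀pos, hδ₀gap⟩ with ht0
  set seq : ℕ → {q : A × ℝ // Good q} := fun n => F^[n] t0 with hseq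
  set Y : ℕ → A := fun n => (seq n).1.1 with hY
  set D : ℕ → ℝ := fun n => (seq n).1.2 with hD
  have hseqsucc : ∀ n, seq (n+1) = F (seq n) := fun n => Function.iterate_succ_apply' F n t0
  have hYsa : ∀ n, IsSelfAdjoint (Y n) := fun n => (seq n).2.1
  have hDpos : ∀ n, 0 < D n := fun n => (seq n).2.2.1
  have hgap : ∀ n, ∀ μ ∈ spectrum ℝ (Y n), ∀ μ' ∈ spectrum ℝ (Y n), μ ≠ μ' →
      8 * D n ≤ |μ - μ'| := fun n => (seq n).2.2.2
  have hYY : ∀ n, ‖Y n - Y (n+1)‖ < D n := by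
    intro n
    have := hF1 (seq n)
    rwa [← hseqsucc n] at this
  have hDhalf : ∀ n, D (n+1) ≤ D n / 2 := by
    intro n
    have := hF2 (seq n)
    rwa [← hseqsucc n] at this
  have hproj : ∀ n, ∀ μ ∈ spectrum ℝ (Y (n+1)),
      (Φ (cfc (Set.indicator {μ} (fun _ => (1 : ℝ))) (Y (n+1)))).re < D n := by
    intro n
    have := hF3 (seq n)
    rwa [← hseqsucc n] at this
  have hDgeo : ∀ n k, D (n + k) ≤ D n * (1/2)^k := by
    intro n k
    induction k with
    | zero => simp
    | succ k ih =>
      have := hDhalf (n + k)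
      calc D (n + (k+1)) = D ((n + k) + 1) := by ring_nf
      _ ≤ D (n + k) / 2 := this
      _ ≤ (D n * (1/2)^k) / 2 := by linarith
      _ = D n * (1/2)^(k+1) := by ring
  have hcauchy : CauchySeq Y := by
    apply cauchySeq_of_le_geometric (1/2) (D 0) (by norm_num)
    intro n
    rw [dist_eq_norm]
    have h1 := (hYY n).le
    have h2 := hDgeo 0 n
    simp only [Nat.zero_add] at h2
    linarith
  obtain ⟨y, hy⟩ := cauchySeq_tendsto_of_complete hcauchy
  have htail : ∀ n, dist (Y n) y ≤ 2 * D n := by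
    intro n
    have hu : ∀ k, dist (Y (n + k)) (Y (n + k + 1)) ≤ D n * (1/2)^k := by
      intro k
      rw [dist_eq_norm]
      have h1 := (hYY (n + k)).le
      have h2 := hDgeo n k
      linarith
    have ha : Tendsto (fun k => Y (n + k)) atTop (𝓝 y) := by
      have h := hy.comp (tendsto_add_atTop_nat n)
      have heqf : (fun k => Y (n + k)) = (Y ∘ fun k => k + n) :=
        funext fun k => by simp [Function.comp, Nat.add_comm]
      rw [heqf]
      exact h
    have hres := dist_le_of_le_geometric_of_tendsto₀ (1/2) (D n) (by norm_num) hu ha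
    have hres' : dist (Y n) y ≤ D n / (1 - 1/2) := by simpa using hres
    have heq2 : D n / (1 - 1/2) = 2 * D n := by norm_num; ring
    linarith [hres'.trans_eq heq2]
  have hself : IsSelfAdjoint y := by
    have h1 : Tendsto (fun n => star (Y n)) atTop (𝓝 (star y)) :=
      (continuous_star.tendsto y).comp hy
    have h2 : (fun n => star (Y n)) = Y := funext fun n => (hYsa n).star_eq
    rw [h2] at h1
    exact tendsto_nhds_unique h1 hy
  have hD0 : Tendsto D atTop (𝓝 0) := by
    apply squeeze_zero (fun n => (hDpos n).le)
    · intro n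
      have := hDgeo 0 n
      simpa using this
    · simpa using (tendsto_pow_atTop_nhds_zero_of_lt_one (by norm_num) (by norm_num)
        (r := (1/2 : ℝ))).const_mul (D 0)
  have hup : ∀ n, ∀ l ∈ spectrum ℝ y, ∃ μ ∈ spectrum ℝ (Y n), |l - μ| ≤ 2 * D n := by
    intro n l hl
    obtain ⟨μ, hμ, hle⟩ := aux_spec_perturb (hYsa n) hself hl
    refine ⟨μ, hμ, hle.trans ?_⟩
    rw [← dist_eq_norm]
    exact htail n
  have hdown : ∀ n, ∀ μ ∈ spectrum ℝ (Y n), ∃ l ∈ spectrum ℝ y, |μ - l| ≤ 2 * D n := by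
    intro n μ hμ
    obtain ⟨l, hl, hle⟩ := aux_spec_perturb hself (hYsa n) hμ
    refine ⟨l, hl, hle.trans ?_⟩
    rw [norm_sub_rev, ← dist_eq_norm]
    exact htail n
  refine ⟨y, hself, ?_, ?_, ?_⟩
  · -- ‖x - y‖ < ε
    have h0 : Y 0 = y₀ := rfl
    have hD00 : D 0 = δ₀ := rfl
    calc ‖x - y‖ ≤ ‖x - y₀‖ + ‖y₀ - y‖ := by
          have : x - y = (x - y₀) + (y₀ - y) := by abel
          rw [this]; exact norm_add_le _ _
    _ ≤ ‖x - y₀‖ + 2 * D 0 := by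
        have h5 := htail 0
        rw [dist_eq_norm, h0] at h5
        linarith
    _ < ε/2 + 2 * (ε/8) := by
        rw [hD00]
        have := hδ₀le
        linarith
    _ ≤ ε := by linarith
  · -- nowhere dense
    refine (spectrum.isClosed y).isNowhereDense_iff.mpr ?_
    by_contra hcon
    obtain ⟨t, ht⟩ := Set.nonempty_iff_ne_empty.mpr hcon
    obtain ⟨η, hη, hball⟩ := Metric.mem_nhds_iff.mp (mem_interior_iff_mem_nhds.mp ht)
    obtain ⟨n, hn⟩ := (hD0.eventually (eventually_lt_nhds (show (0:ℝ) < η/6 by linarith))).exists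
    have htspec : t ∈ spectrum ℝ y := interior_subset ht
    obtain ⟨μ, hμ, hμt⟩ := hup n t htspec
    set s : ℝ := μ + 4 * D n with hsdef
    have hsball : s ∈ Metric.ball t η := by
      rw [Metric.mem_ball, Real.dist_eq]
      have : |s - t| ≤ |s - μ| + |μ - t| := abs_sub_le _ _ _
      have h1 : |s - μ| = 4 * D n := by
        rw [hsdef]; rw [show μ + 4 * D n - μ = 4 * D n by ring]
        exact abs_of_pos (by linarith [hDpos n])
      have h2 : |μ - t| = |t - μ| := abs_sub_comm _ _
      calc |s - t| ≤ |s - μ| + |μ - t| := abs_sub_le _ _ _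
      _ = 4 * D n + |t - μ| := by rw [h1, h2]
      _ ≤ 4 * D n + 2 * D n := by linarith
      _ < η := by linarith
    have hsspec : s ∈ spectrum ℝ y := hball hsball
    obtain ⟨μ', hμ', hμ's⟩ := hup n s hsspec
    have hne : μ' ≠ μ := by
      intro h
      rw [h] at hμ's
      have : |s - μ| = 4 * D n := by
        rw [hsdef, show μ + 4 * D n - μ = 4 * D n by ring]
        exact abs_of_pos (by linarith [hDpos n])
      rw [this] at hμ's
      linarith [hDpos n]
    have hgapn := hgap n μ hμ μ' hμ' (Ne.symm hne)
    have : |μ - μ'| ≤ |μ - s| + |s - μ'| := abs_sub_le _ _ _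
    have h3 : |μ - s| = 4 * D n := by
      rw [hsdef, show μ - (μ + 4 * D n) = -(4 * D n) by ring, abs_neg]
      exact abs_of_pos (by linarith [hDpos n])
    have h4 : |s - μ'| ≤ 2 * D n := hμ's
    linarith [hDpos n]
  · -- preperfect
    intro l hl
    rw [accPt_iff_nhds]
    by_contra hcon
    push_neg at hcon
    obtain ⟨U, hU, hUiso⟩ := hcon
    obtain ⟨δ, hδ, hballU⟩ := Metric.mem_nhds_iff.mp hU
    have hiso : ∀ z ∈ spectrum ℝ y, |z - l| < δ → z = l := by
      intro z hz hzl
      exact hUiso z ⟨hballU (by rwa [Metric.mem_ball, Real.dist_eq]), hz⟩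
    set f : ℝ → ℝ := fun t => max 0 (min 1 (2 - 4 * |t - l| / δ)) with hfdef
    have hfc : Continuous f := by
      apply continuous_const.max
      apply continuous_const.min
      fun_prop
    have hf1 : ∀ t : ℝ, |t - l| ≤ δ/4 → f t = 1 := by
      intro t htl
      have h1 : (1:ℝ) ≤ 2 - 4 * |t - l| / δ := by
        have h2 : 4 * |t - l| / δ ≤ 1 := by
          rw [div_le_one hδ]; linarith
        linarith
      show max 0 (min 1 (2 - 4 * |t - l| / δ)) = 1
      rw [min_eq_left h1, max_eq_right zero_le_one]
    have hf0 : ∀ t : ℝ, δ/2 ≤ |t - l| → f t = 0 := by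
      intro t htl
      have h1 : 2 - 4 * |t - l| / δ ≤ 0 := by
        have h2 : (2:ℝ) ≤ 4 * |t - l| / δ := by
          rw [le_div_iff₀ hδ]; linarith
        linarith
      show max 0 (min 1 (2 - 4 * |t - l| / δ)) = 0
      rw [max_eq_left ((min_le_right _ _).trans h1)]
    have hfy : ∀ t ∈ spectrum ℝ y, t ≠ l → f t = 0 := by
      intro t ht htne
      apply hf0
      by_contra hlt
      push_neg at hlt
      exact htne (hiso t ht (by linarith))
    have hfl : f l = 1 := hf1 l (by simp; positivity)
    set q : A := cfc f y with hq
    have hqsa : IsSelfAdjoint q := cfc_predicate f y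
    have hq1 : (1:ℝ) ≤ ‖q‖ := by
      have := norm_apply_le_norm_cfc f y hl hfc.continuousOn hself
      rwa [hfl, norm_one] at this
    have hqq : star q * q = q := by
      rw [hqsa.star_eq, hq, ← cfc_mul _ _ y hfc.continuousOn hfc.continuousOn]
      apply cfc_congr
      intro t ht
      by_cases htl : t = l
      · subst htl
        simp [hfl]
      · simp [hfy t ht htl]
    -- re Φ q ≤ 0 via approximations
    have hre : (Φ q).re ≤ 0 := by
      by_contra hpos
      push_neg at hpos
      set θ : ℝ := (Φ q).re with hθdef
      have hcfc : Tendsto (fun n => cfc f (Y n)) atTop (𝓝 q) :=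
        aux_cfc_tendsto hfc hYsa hself hy
      have hE1 : ∀ᶠ n in atTop, D n < θ/2 :=
        hD0.eventually (eventually_lt_nhds (by linarith))
      have hE2 : ∀ᶠ n in atTop, D (n+1) < δ/16 := by
        have hshift : Tendsto (fun n => D (n+1)) atTop (𝓝 0) :=
          hD0.comp (tendsto_add_atTop_nat 1)
        exact hshift.eventually (eventually_lt_nhds (by linarith))
      have hE3 : ∀ᶠ n in atTop, ‖cfc f (Y (n+1)) - q‖ < θ/2 := by
        have hshift : Tendsto (fun n => cfc f (Y (n+1))) atTop (𝓝 q) :=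
          hcfc.comp (tendsto_add_atTop_nat 1)
        filter_upwards [hshift.eventually_mem (Metric.ball_mem_nhds q
          (show (0:ℝ) < θ/2 by linarith))] with n hn
        rwa [Metric.mem_ball, dist_eq_norm] at hn
      obtain ⟨n, ⟨hn1, hn2⟩, hn3⟩ := ((hE1.and hE2).and hE3).exists
      -- the unique spectral point of Y (n+1) near l
      obtain ⟨μ, hμ, hμl⟩ := hup (n+1) l hl
      have hrsmall : 2 * D (n+1) ≤ δ/8 := by linarith
      have hind : ∀ t ∈ spectrum ℝ (Y (n+1)),
          f t = Set.indicator {μ} (fun _ => (1:ℝ)) t := by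
        intro t ht
        by_cases htμ : t = μ
        · rw [Set.indicator_of_mem (Set.mem_singleton_iff.mpr htμ)]
          apply hf1
          rw [htμ, abs_sub_comm]
          linarith
        · rw [Set.indicator_of_notMem (by simpa using htμ)]
          by_contra hft
          have htl2 : |t - l| < δ/2 := by
            by_contra hge
            push_neg at hge
            exact hft (hf0 t hge)
          obtain ⟨u, hu, htu⟩ := hdown (n+1) t ht
          have hul : u = l := by
            apply hiso u hu
            have : |u - l| ≤ |u - t| + |t - l| := abs_sub_le _ _ _
            have h6 : |u - t| = |t - u| := abs_sub_comm _ _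
            rw [h6] at this
            calc |u - l| ≤ |t - u| + |t - l| := this
            _ < δ/8 + δ/2 := by linarith
            _ < δ := by linarith
          rw [hul] at htu
          have hμt : |μ - t| ≤ 4 * D (n+1) := by
            have h7 : |μ - t| ≤ |μ - l| + |l - t| := abs_sub_le _ _ _
            have h8 : |μ - l| = |l - μ| := abs_sub_comm _ _
            have h9 : |l - t| = |t - l| := abs_sub_comm _ _
            rw [h8, h9] at h7
            linarith
          have := hgap (n+1) μ hμ t ht (Ne.symm htμ)
          linarith [hDpos (n+1)]
      have heq : cfc f (Y (n+1)) = cfc (Set.indicator {μ} (fun _ => (1:ℝ))) (Y (n+1)) :=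
        cfc_congr hind
      have hbound := hproj n μ hμ
      rw [← heq] at hbound
      -- Φ q vs Φ (cfc f (Y (n+1)))
      have hsplit : Φ q = Φ (cfc f (Y (n+1))) + Φ (q - cfc f (Y (n+1))) := by
        rw [← map_add]
        congr 1
        abel
      have hdiff : (Φ (q - cfc f (Y (n+1)))).re ≤ ‖q - cfc f (Y (n+1))‖ := by
        apply hΦle
        exact hqsa.sub (cfc_predicate f (Y (n+1)))
      have hnorm : ‖q - cfc f (Y (n+1))‖ < θ/2 := by
        rw [norm_sub_rev]
        exact hn3
      have : θ < θ := by
        calc θ = (Φ q).re := rfl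
        _ = (Φ (cfc f (Y (n+1)))).re + (Φ (q - cfc f (Y (n+1)))).re := by
            rw [hsplit, Complex.add_re]
        _ < D n + θ/2 := by
            have := hdiff.trans_lt hnorm
            linarith
        _ < θ/2 + θ/2 := by linarith
        _ = θ := by ring
      exact lt_irrefl θ this
    -- conclude q = 0, contradiction
    have hpos := hΦpos q
    rw [hqq] at hpos
    have hΦq : Φ q = 0 := by
      apply Complex.ext
      · simpa using le_antisymm hre hpos.1
      · simpa using hpos.2
    have hq0 : q = 0 := hΦfaithful q (by rwa [hqq])
    rw [hq0] at hq1
    simp at hq1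
    linarith
end

section
/- Let A be a unital C*-algebra, τ a positive linear functional on A, and c > 0 a constant such that τ(p) ≥ c for every nonzero projection p ∈ A (the Kadison property with Kadison constant at least c). Then for every self-adjoint x ∈ A the spectrum of x has at most τ(1)/c connected components; in particular the spectrum of x has band structure, i.e., it is a finite union of disjoint compact intervals (each connected component of the compact set spec(x) ⊆ ℝ being a compact interval, possibly a single point). -/
/-!
If `s ∉ spec x`, the indicator of `(-∞, s)` is continuous on `spec x`, so it gives a spectral
projection `P_s`, and `P_s = P_u + P_{[u, s)}` for `u < s` also outside the spectrum. Points of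
`spec x` in different connected components are separated by such a gap `u`, so `n` components
cut `1 = P_s` (for `s` above the spectrum) into `n` nonzero projections plus a remainder
projection. By the Kadison property the former have `τ`-value `≥ c` and the latter `≥ 0`, whence
`n * c ≤ τ 1`. Each component of the compact set `spec x ⊆ ℝ` is compact and connected, i.e. a
closed interval.
-/

open Set

lemma continuousOn_indicator_one_of_disjoint_frontier {X : Type*} [TopologicalSpace X]
    {K U : Set X} (h : Disjoint K (frontier U)) : ContinuousOn (U.indicator (1 : X → ℝ)) K :=
  fun _ hk => (continuousOn_const.continuousAt_indicator
    (disjoint_left.mp h hk)).continuousWithinAt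

lemma IsCompact.connectedComponentIn {X : Type*} [TopologicalSpace X] {K : Set X}
    (hK : IsCompact K) {t : X} (ht : t ∈ K) : IsCompact (connectedComponentIn K t) := by
  have : CompactSpace K := isCompact_iff_compactSpace.mp hK
  rw [connectedComponentIn_eq_image ht]
  exact isClosed_connectedComponent.isCompact.image continuous_subtype_val

lemma exists_Icc_eq_connectedComponentIn {K : Set ℝ} (hK : IsCompact K) {t : ℝ} (ht : t ∈ K) :
    ∃ a b : ℝ, a ≤ b ∧ connectedComponentIn K t = Icc a b := by
  have hIcc := eq_Icc_of_connected_compact (isConnected_connectedComponentIn_iff.mpr ht)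
    (hK.connectedComponentIn ht)
  have htIcc := hIcc ▸ mem_connectedComponentIn ht
  exact ⟨_, _, htIcc.1.trans htIcc.2, hIcc⟩

lemma exists_mem_Ioo_notMem_of_connectedComponentIn_ne {K : Set ℝ} {a b : ℝ}
    (ha : a ∈ K) (hb : b ∈ K) (hab : a ≤ b)
    (hne : connectedComponentIn K a ≠ connectedComponentIn K b) : ∃ u ∈ Ioo a b, u ∉ K := by
  by_contra! hgap
  have hIcc : Icc a b ⊆ K := by
    intro t ht
    rcases ht.1.eq_or_lt with rfl | hat
    · exact ha
    rcases ht.2.eq_or_lt with rfl | htb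
    · exact hb
    exact hgap t ⟨hat, htb⟩
  exact hne (connectedComponentIn_eq
    (isPreconnected_Icc.subset_connectedComponentIn ⟨le_rfl, hab⟩ hIcc ⟨hab, le_rfl⟩))

lemma Set.finite_and_ncard_le_of_forall_finset_card_le {α : Type*} {s : Set α} {N : ℝ}
    (h : ∀ F : Finset α, ↑F ⊆ s → (F.card : ℝ) ≤ N) : s.Finite ∧ (s.ncard : ℝ) ≤ N := by
  have hfin : s.Finite := by
    by_contra hinf
    obtain ⟨F, hFs, hF⟩ := Set.Infinite.exists_subset_card_eq hinf (⌊N⌋₊ + 1)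
    have := h F hFs
    rw [hF, Nat.cast_succ] at this
    exact (Nat.lt_floor_add_one N).not_ge this
  refine ⟨hfin, ?_⟩
  rw [ncard_eq_toFinset_card s hfin]
  exact h _ (by simp)

section SpectralProjection

variable {A : Type*} [CStarAlgebra A]

noncomputable def spectralProjection (x : A) (U : Set ℝ) : A :=
  cfc (U.indicator 1) x

variable {x : A} {U V : Set ℝ}

lemma isSelfAdjoint_spectralProjection : IsSelfAdjoint (spectralProjection x U) :=
  cfc_predicate _ x

lemma spectralProjection_mul_self (hU : Disjoint (spectrum ℝ x) (frontier U)) :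
    spectralProjection x U * spectralProjection x U = spectralProjection x U := by
  have hcont := continuousOn_indicator_one_of_disjoint_frontier hU
  rw [spectralProjection, ← cfc_mul _ _ x hcont hcont]
  exact cfc_congr fun t _ => by rw [← Pi.mul_apply, ← inter_indicator_one, inter_self]

lemma spectralProjection_ne_zero (hx : IsSelfAdjoint x)
    (hU : Disjoint (spectrum ℝ x) (frontier U)) (hxU : (spectrum ℝ x ∩ U).Nonempty) :
    spectralProjection x U ≠ 0 := by
  obtain ⟨t, htx, htU⟩ := hxU
  have : Nontrivial A := by
    by_contra h
    rw [not_nontrivial_iff_subsingleton] at h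
    simp [spectrum.of_subsingleton] at htx
  intro h0
  have hspec := cfc_map_spectrum (U.indicator (1 : ℝ → ℝ)) x hx
    (continuousOn_indicator_one_of_disjoint_frontier hU)
  rw [← spectralProjection, h0, spectrum.zero_eq] at hspec
  have : (1 : ℝ) ∈ ({0} : Set ℝ) := hspec ▸ ⟨t, htx, indicator_of_mem htU 1⟩
  simp at this

lemma spectralProjection_union (hU : Disjoint (spectrum ℝ x) (frontier U))
    (hV : Disjoint (spectrum ℝ x) (frontier V)) (hUV : Disjoint U V) :
    spectralProjection x (U ∪ V) = spectralProjection x U + spectralProjection x V := by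
  rw [spectralProjection, indicator_union_of_disjoint hUV,
    cfc_add x _ _ (continuousOn_indicator_one_of_disjoint_frontier hU)
      (continuousOn_indicator_one_of_disjoint_frontier hV)]
  rfl

lemma spectralProjection_eq_one (hx : IsSelfAdjoint x) (hxU : spectrum ℝ x ⊆ U) :
    spectralProjection x U = 1 := by
  rw [spectralProjection, cfc_congr (fun t ht => indicator_of_mem (hxU ht) 1)]
  exact cfc_one ℝ x

end SpectralProjection

section Kadison

variable {A : Type*} [CStarAlgebra A] (τ : A →ₗ[ℂ] ℂ) {c : ℝ}
  (hK : ∀ p : A, p ≠ 0 → IsSelfAdjoint p → p * p = p → c ≤ (τ p).re)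
include hK

lemma re_nonneg_of_kadison (hc : 0 < c) {p : A} (hp : IsSelfAdjoint p) (hpp : p * p = p) :
    0 ≤ (τ p).re := by
  rcases eq_or_ne p 0 with rfl | hp0
  · simp
  · exact hc.le.trans (hK p hp0 hp hpp)

variable {x : A} (hx : IsSelfAdjoint x)
include hx

lemma le_re_spectralProjection {U : Set ℝ} (hU : Disjoint (spectrum ℝ x) (frontier U))
    (hxU : (spectrum ℝ x ∩ U).Nonempty) : c ≤ (τ (spectralProjection x U)).re :=
  hK _ (spectralProjection_ne_zero hx hU hxU) isSelfAdjoint_spectralProjection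
    (spectralProjection_mul_self hU)

lemma card_mul_le_re_spectralProjection_Iio (hc : 0 < c) (F : Finset ℝ)
    (hF : ↑F ⊆ spectrum ℝ x) (hFinj : InjOn (connectedComponentIn (spectrum ℝ x)) F)
    {s : ℝ} (hs : s ∉ spectrum ℝ x) (hFs : ∀ r ∈ F, r < s) :
    F.card * c ≤ (τ (spectralProjection x (Iio s))).re := by
  induction F using Finset.induction_on_max generalizing s with
  | empty =>
    simpa using re_nonneg_of_kadison τ hK hc isSelfAdjoint_spectralProjection
      (spectralProjection_mul_self (by simpa [frontier_Iio] using hs))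
  | insert a F hFa ih =>
    have haK : a ∈ spectrum ℝ x := hF (Finset.mem_insert_self a F)
    have has : a < s := hFs a (Finset.mem_insert_self a F)
    rw [Finset.card_insert_of_notMem (fun ha => (hFa a ha).false), Nat.cast_succ, add_one_mul]
    rcases F.eq_empty_or_nonempty with rfl | hFne
    · simpa using le_re_spectralProjection τ hK hx (by simpa [frontier_Iio] using hs)
        ⟨a, haK, has⟩
    have hbF : F.max' hFne ∈ F := F.max'_mem hFne
    obtain ⟨u, ⟨hbu, hua⟩, hu⟩ := exists_mem_Ioo_notMem_of_connectedComponentIn_ne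
      (hF (Finset.mem_insert_of_mem hbF)) haK (hFa _ hbF).le
      fun h => (hFa _ hbF).ne (hFinj (by simp [hbF]) (by simp) h)
    have hus : u < s := hua.trans has
    rw [← Iio_union_Ico_eq_Iio hus.le,
      spectralProjection_union (U := Iio u) (V := Ico u s) (by simpa [frontier_Iio] using hu)
        (by simpa [frontier_Ico hus] using ⟨hu, hs⟩)
        ((Iio_disjoint_Ici le_rfl).mono_right Ico_subset_Ici_self),
      map_add, Complex.add_re]
    refine add_le_add (ih ?_ ?_ hu fun r hr => (F.le_max' r hr).trans_lt hbu) ?_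
    · exact (Finset.coe_subset.mpr (Finset.subset_insert a F)).trans hF
    · exact hFinj.mono (Finset.coe_subset.mpr (Finset.subset_insert a F))
    · exact le_re_spectralProjection τ hK hx (by simpa [frontier_Ico hus] using ⟨hu, hs⟩)
        ⟨a, haK, hua.le, has⟩

lemma card_mul_le_re_one (hc : 0 < c) (F : Finset ℝ) (hF : ↑F ⊆ spectrum ℝ x)
    (hFinj : InjOn (connectedComponentIn (spectrum ℝ x)) F) : F.card * c ≤ (τ 1).re := by
  obtain ⟨M, hM⟩ := (spectrum.isCompact (𝕜 := ℝ) x).bddAbove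
  have hlt : ∀ t ∈ spectrum ℝ x, t < M + 1 := fun t ht => (hM ht).trans_lt (lt_add_one M)
  rw [← spectralProjection_eq_one hx hlt]
  exact card_mul_le_re_spectralProjection_Iio τ hK hx hc F hF hFinj (fun h => (hlt _ h).false)
    fun r hr => hlt r (hF hr)

end Kadison

theorem spectrum_band_structure_of_kadison_property_general
    {A : Type*} [CStarAlgebra A]
    (τ : A →ₗ[ℂ] ℂ)
    (c : ℝ) (hc : 0 < c)
    (hK : ∀ p : A, p ≠ 0 → IsSelfAdjoint p → p * p = p → c ≤ (τ p).re)
    (x : A) (hx : IsSelfAdjoint x) :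
    ((fun t => connectedComponentIn (spectrum ℝ x) t) '' (spectrum ℝ x)).Finite ∧
    (((fun t => connectedComponentIn (spectrum ℝ x) t) '' (spectrum ℝ x)).ncard : ℝ)
        ≤ (τ 1).re / c ∧
    ∀ C ∈ (fun t => connectedComponentIn (spectrum ℝ x) t) '' (spectrum ℝ x),
      ∃ a b : ℝ, a ≤ b ∧ C = Set.Icc a b := by
  set K := spectrum ℝ x
  obtain ⟨K', hK'K, hbij⟩ := exists_subset_bijOn K (connectedComponentIn K)
  obtain ⟨hfin, hncard⟩ := finite_and_ncard_le_of_forall_finset_card_le fun F (hF : ↑F ⊆ K') =>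
    (le_div_iff₀ hc).mpr (card_mul_le_re_one τ hK hx hc F (hF.trans hK'K) (hbij.injOn.mono hF))
  refine ⟨hbij.image_eq ▸ hfin.image _, ?_, ?_⟩
  · rwa [← hbij.image_eq, hbij.injOn.ncard_image]
  · rintro _ ⟨t, ht, rfl⟩
    exact exists_Icc_eq_connectedComponentIn (spectrum.isCompact x) ht

/-- Band structure: if a unital C*-algebra with a positive linear functional `τ` has the
Kadison property with constant `c > 0` (i.e. `τ(p) ≥ c` for every nonzero projection `p`),
then the spectrum of every self-adjoint element has at most `τ(1)/c` connected components,
and each connected component is a compact interval; in particular the spectrum is a finite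
union of disjoint compact intervals (band structure). -/
theorem spectrum_band_structure_of_kadison_property
    {A : Type*} [CStarAlgebra A] [Nontrivial A]
    (τ : A →ₗ[ℂ] ℂ)
    (hτpos : ∀ a : A, 0 ≤ (τ (star a * a)).re ∧ (τ (star a * a)).im = 0)
    (c : ℝ) (hc : 0 < c)
    (hK : ∀ p : A, p ≠ 0 → IsSelfAdjoint p → p * p = p → c ≤ (τ p).re)
    (x : A) (hx : IsSelfAdjoint x) :
    ((fun t => connectedComponentIn (spectrum ℝ x) t) '' (spectrum ℝ x)).Finite ∧
    (((fun t => connectedComponentIn (spectrum ℝ x) t) '' (spectrum ℝ x)).ncard : ℝ)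
        ≤ (τ 1).re / c ∧
    ∀ C ∈ (fun t => connectedComponentIn (spectrum ℝ x) t) '' (spectrum ℝ x),
      ∃ a b : ℝ, a ≤ b ∧ C = Set.Icc a b :=
  spectrum_band_structure_of_kadison_property_general τ c hc hK x hx
end

section
/- Let A be a unital C*-algebra, τ a positive linear functional on A, and c > 0 a constant such that τ(p) ≥ c for every nonzero projection p ∈ A. Then A contains no self-adjoint element whose spectrum is a Cantor set; that is, for every self-adjoint x ∈ A the (nonempty) spectrum of x is not both nowhere dense in ℝ and without isolated points. -/
/-!
For a point `a` outside the spectrum of a self-adjoint `x`, the indicator of `(-∞, a)` is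
continuous on the spectrum, so `e a := cfc ((Iio a).indicator 1) x` is a projection, and
`e b - e a` is a nonzero projection whenever `a < b` are outside the spectrum with a spectral
point in between; by the Kadison property `τ (e a)` then grows by at least `c` from `a` to `b`.
A nowhere dense spectrum without isolated points always leaves room for one more such cut to the
right of the last one, so `τ (e a)` is unbounded, while `τ (e a) ≤ τ 1` by positivity.
-/

open Set

lemma continuousOn_indicator_one {X M : Type*} [TopologicalSpace X] [TopologicalSpace M]
    [Zero M] [One M] {s U : Set X} (h : Disjoint s (frontier U)) :
    ContinuousOn (U.indicator (1 : X → M)) s := by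
  classical
  rw [← piecewise_eq_indicator]
  exact continuousOn_const.piecewise (fun t ht => (h.ne_of_mem ht.1 ht.2 rfl).elim)
    continuousOn_const

section Order

variable {X : Type*} [LinearOrder X] [TopologicalSpace X] [OrderClosedTopology X] [DenselyOrdered X]
  {s : Set X}

lemma IsNowhereDense.exists_mem_Ioo_notMem (hs : IsNowhereDense s) {a b : X} (hab : a < b) :
    ∃ t ∈ Ioo a b, t ∉ s := by
  by_contra! h
  have : Ioo a b ⊆ interior (closure s) :=
    interior_maximal (fun t ht => subset_closure (h t ht)) isOpen_Ioo
  rw [hs] at this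
  exact (nonempty_Ioo.mpr hab).ne_empty (subset_empty_iff.mp this)

lemma Preperfect.exists_cut_of_isNowhereDense (hpp : Preperfect s) (hnd : IsNowhereDense s)
    {a t : X} (ht : t ∈ s) (hat : a < t) :
    ∃ b ∉ s, a < b ∧ (s ∩ Ico a b).Nonempty ∧ (s ∩ Ioi b).Nonempty := by
  have cut_between {t₁ t₂ : X} (h₁ : t₁ ∈ s) (h₂ : t₂ ∈ s) (hat₁ : a < t₁) (h₁₂ : t₁ < t₂) :
      ∃ b ∉ s, a < b ∧ (s ∩ Ico a b).Nonempty ∧ (s ∩ Ioi b).Nonempty := by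
    obtain ⟨b, ⟨htb, hbt⟩, hb⟩ := hnd.exists_mem_Ioo_notMem h₁₂
    exact ⟨b, hb, hat₁.trans htb, ⟨t₁, h₁, hat₁.le, htb⟩, ⟨t₂, h₂, hbt⟩⟩
  obtain ⟨t', ⟨hat', ht'⟩, hne⟩ :=
    accPt_iff_nhds.mp (hpp t ht) (Ioi a) (isOpen_Ioi.mem_nhds hat)
  rcases hne.lt_or_gt with h | h
  · exact cut_between ht' ht hat' h
  · exact cut_between ht ht' hat h

end Order

section CStarAlgebra

variable {A : Type*} [CStarAlgebra A] {x : A}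

lemma isStarProjection_cfc_indicator {U : Set ℝ} (hU : Disjoint (spectrum ℝ x) (frontier U)) :
    IsStarProjection (cfc (U.indicator (1 : ℝ → ℝ)) x) where
  isIdempotentElem := by
    rw [IsIdempotentElem, ← cfc_mul _ _ x (continuousOn_indicator_one hU)
      (continuousOn_indicator_one hU)]
    exact cfc_congr fun t _ => by by_cases ht : t ∈ U <;> simp [ht]
  isSelfAdjoint := cfc_predicate _ x

lemma cfc_indicator_ne_zero (hx : IsSelfAdjoint x) {U : Set ℝ}
    (hU : Disjoint (spectrum ℝ x) (frontier U)) (hne : (spectrum ℝ x ∩ U).Nonempty) :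
    cfc (U.indicator (1 : ℝ → ℝ)) x ≠ 0 := by
  obtain ⟨t, hts, htU⟩ := hne
  intro h0
  rw [← cfc_zero ℝ x] at h0
  have := eqOn_of_cfc_eq_cfc h0 (continuousOn_indicator_one hU) (ha := hx)
  simpa [htU] using this hts

lemma cfc_indicator_union {U V : Set ℝ} (hUV : Disjoint U V)
    (hU : Disjoint (spectrum ℝ x) (frontier U)) (hV : Disjoint (spectrum ℝ x) (frontier V)) :
    cfc ((U ∪ V).indicator (1 : ℝ → ℝ)) x =
      cfc (U.indicator (1 : ℝ → ℝ)) x + cfc (V.indicator (1 : ℝ → ℝ)) x := by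
  rw [indicator_union_of_disjoint hUV]
  exact cfc_add _ _ (hf := continuousOn_indicator_one hU) (hg := continuousOn_indicator_one hV)

variable (τ : A →ₗ[ℂ] ℂ)

lemma re_apply_nonneg_of_isStarProjection (hτ : ∀ a : A, 0 ≤ (τ (star a * a)).re) {p : A}
    (hp : IsStarProjection p) : 0 ≤ (τ p).re := by
  simpa [hp.isSelfAdjoint.star_eq, hp.isIdempotentElem.eq] using hτ p

lemma re_apply_cfc_indicator_Iio_le_re_apply_one (hτ : ∀ a : A, 0 ≤ (τ (star a * a)).re)
    (hx : IsSelfAdjoint x) {a : ℝ} (ha : a ∉ spectrum ℝ x) :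
    (τ (cfc ((Iio a).indicator (1 : ℝ → ℝ)) x)).re ≤ (τ 1).re := by
  have hIio : Disjoint (spectrum ℝ x) (frontier (Iio a)) := by simpa using ha
  have hIci : Disjoint (spectrum ℝ x) (frontier (Ici a)) := by simpa using ha
  have hsplit : (1 : A) = cfc ((Iio a).indicator (1 : ℝ → ℝ)) x +
      cfc ((Ici a).indicator (1 : ℝ → ℝ)) x := by
    rw [← cfc_indicator_union (Iio_disjoint_Ici le_rfl) hIio hIci, Iio_union_Ici,
      indicator_univ, cfc_one ℝ x]
  rw [hsplit, map_add, Complex.add_re, le_add_iff_nonneg_right]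
  exact re_apply_nonneg_of_isStarProjection τ hτ (isStarProjection_cfc_indicator hIci)

lemma re_apply_cfc_indicator_Iio_add_le {c : ℝ}
    (hK : ∀ p : A, p ≠ 0 → IsSelfAdjoint p → p * p = p → c ≤ (τ p).re)
    (hx : IsSelfAdjoint x) {a b : ℝ} (hab : a < b) (ha : a ∉ spectrum ℝ x)
    (hb : b ∉ spectrum ℝ x) (hne : (spectrum ℝ x ∩ Ico a b).Nonempty) :
    (τ (cfc ((Iio a).indicator (1 : ℝ → ℝ)) x)).re + c ≤
      (τ (cfc ((Iio b).indicator (1 : ℝ → ℝ)) x)).re := by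
  have hIio : Disjoint (spectrum ℝ x) (frontier (Iio a)) := by simpa using ha
  have hIco : Disjoint (spectrum ℝ x) (frontier (Ico a b)) := by
    simp [frontier_Ico hab, ha, hb]
  have hp := isStarProjection_cfc_indicator hIco
  rw [← Iio_union_Ico_eq_Iio hab.le, cfc_indicator_union (Iio_disjoint_Ici le_rfl |>.mono_right Ico_subset_Ici_self) hIio hIco,
    map_add, Complex.add_re, add_le_add_iff_left]
  exact hK _ (cfc_indicator_ne_zero hx hIco hne) hp.isSelfAdjoint hp.isIdempotentElem

end CStarAlgebra

/-- If a unital C*-algebra with a positive linear functional `τ` has the Kadison property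
with constant `c > 0` (i.e. `τ(p) ≥ c` for every nonzero projection `p`), then no
self-adjoint element has spectrum which is a Cantor set, i.e. for every self-adjoint `x`
the spectrum of `x` is not both nowhere dense in `ℝ` and without isolated points. -/
theorem no_cantor_spectrum_of_kadison_property
    {A : Type*} [CStarAlgebra A] [Nontrivial A]
    (τ : A →ₗ[ℂ] ℂ)
    (hτpos : ∀ a : A, 0 ≤ (τ (star a * a)).re ∧ (τ (star a * a)).im = 0)
    (c : ℝ) (hc : 0 < c)
    (hK : ∀ p : A, p ≠ 0 → IsSelfAdjoint p → p * p = p → c ≤ (τ p).re)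
    (x : A) (hx : IsSelfAdjoint x) :
    ¬ (IsNowhereDense (spectrum ℝ x) ∧ Preperfect (spectrum ℝ x)) := by
  rintro ⟨hnd, hpp⟩
  have hτ : ∀ a : A, 0 ≤ (τ (star a * a)).re := fun a => (hτpos a).1
  have hgrow : ∀ n : ℕ, ∃ a ∉ spectrum ℝ x, (spectrum ℝ x ∩ Ioi a).Nonempty ∧
      n * c ≤ (τ (cfc ((Iio a).indicator (1 : ℝ → ℝ)) x)).re := by
    intro n
    induction n with
    | zero =>
      obtain ⟨t, ht⟩ := ContinuousFunctionalCalculus.spectrum_nonempty (R := ℝ) x hx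
      obtain ⟨a, ⟨-, hat⟩, ha⟩ := hnd.exists_mem_Ioo_notMem (sub_one_lt t)
      refine ⟨a, ha, ⟨t, ht, hat⟩, ?_⟩
      simpa using re_apply_nonneg_of_isStarProjection τ hτ
        (isStarProjection_cfc_indicator (U := Iio a) (by simpa using ha))
    | succ n ih =>
      obtain ⟨a, ha, ⟨t, ht, hat⟩, hna⟩ := ih
      obtain ⟨b, hb, hab, hmid, hright⟩ := hpp.exists_cut_of_isNowhereDense hnd ht hat
      refine ⟨b, hb, hright, ?_⟩
      have := re_apply_cfc_indicator_Iio_add_le τ hK hx hab ha hb hmid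
      push_cast
      linarith
  obtain ⟨n, hn⟩ := exists_nat_gt ((τ 1).re / c)
  obtain ⟨a, ha, -, hna⟩ := hgrow n
  have := re_apply_cfc_indicator_Iio_le_re_apply_one τ hτ hx ha
  rw [div_lt_iff₀ hc] at hn
  linarith
end
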